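/- arXiv:1407.7474 — 3 statements merged into one kernel-verified Lean document; each statement's English description precedes it below -/
import Mathlib

section
/- Let G be a countable nonamenable group acting transitively and amenably on a set X, fix x ∈ X, and let H = G_x be its stabilizer. Then the set Q(H) = {g ∈ G : H ∩ gHg⁻¹ is infinite} is thick in G; that is, for every finite subset F ⊆ G the intersection ⋂_{g∈F} gQ(H) is nonempty. -/
open Pointwise

/-- A mean on `X`: a finitely additive probability measure defined on all subsets of `X`. -/
structure Mean (X : Type*) where
  m : Set X → ℝ
  nonneg : ∀ A : Set X, 0 ≤ m A
  total : m Set.univ = 1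
  fin_add : ∀ A B : Set X, Disjoint A B → m (A ∪ B) = m A + m B

/-- A mean on a `G`-set `X` is invariant if it is preserved by the action of every `g ∈ G`. -/
def MeanInvariant (G : Type*) [Group G] {X : Type*} [MulAction G X] (m : Mean X) : Prop :=
  ∀ (g : G) (A : Set X), m.m ((fun x => g • x) '' A) = m.m A

/-- The action of `G` on `X` is amenable: there is a `G`-invariant mean on `X`. -/
def AmenableAction (G : Type*) [Group G] (X : Type*) [MulAction G X] : Prop :=
  ∃ m : Mean X, MeanInvariant G m

/-- A group is amenable if its left translation action on itself admits an invariant mean. -/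
def AmenableGroup (G : Type*) [Group G] : Prop :=
  ∃ m : Mean G, ∀ (g : G) (A : Set G), m.m ((fun x => g * x) '' A) = m.m A

/-- `H` is `L`-q-normal in `M` if `{g ∈ M : gHg⁻¹ ∩ H ∈ L}` generates `M`. -/
def IsLQNormal {G : Type*} [Group G] (L : Subgroup G → Prop) (H M : Subgroup G) : Prop :=
  H ≤ M ∧
    Subgroup.closure
      {g : G | g ∈ M ∧ L (Subgroup.map (MulAut.conj g).toMonoidHom H ⊓ H)} = M

/-- `H` is `L`-wq-normal in `M`: there is an increasing ordinal-indexed chain from `H` to `M`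
whose unions of initial segments are `L`-q-normal at every stage. -/
def IsLWQNormal {G : Type*} [Group G] (L : Subgroup G → Prop) (H M : Subgroup G) : Prop :=
  ∃ (lam : Ordinal.{0}) (c : Ordinal.{0} → Subgroup G),
    (∀ α β : Ordinal.{0}, α ≤ β → β ≤ lam → c α ≤ c β) ∧
    c 0 = H ∧ c lam = M ∧
    ∀ α : Ordinal.{0}, 0 < α → α ≤ lam →
      IsLQNormal L (⨆ (β : Ordinal.{0}) (_ : β < α), c β) (c α)

/-- q*-normality: `{g ∈ M : gHg⁻¹ ∩ H nonamenable}` generates `M`. -/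
def IsQStarNormal {G : Type*} [Group G] (H M : Subgroup G) : Prop :=
  IsLQNormal (fun K => ¬ AmenableGroup ↥K) H M

/-- wq*-normality. -/
def IsWQStarNormal {G : Type*} [Group G] (H M : Subgroup G) : Prop :=
  IsLWQNormal (fun K => ¬ AmenableGroup ↥K) H M

/-- q-normality: `{g ∈ M : gHg⁻¹ ∩ H infinite}` generates `M`. -/
def IsQNormal {G : Type*} [Group G] (H M : Subgroup G) : Prop :=
  IsLQNormal (fun K => ((K : Set G)).Infinite) H M

/-- wq-normality. -/
def IsWQNormal {G : Type*} [Group G] (H M : Subgroup G) : Prop :=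
  IsLWQNormal (fun K => ((K : Set G)).Infinite) H M

/-- `n`-degree `L`-wq-normality in `G`: `L₀ = L`, `L_{n+1} = {H : H is Lₙ-wq-normal in G}`. -/
def NDegLWQNormal {G : Type*} [Group G] (L : Subgroup G → Prop) : ℕ → Subgroup G → Prop
  | 0, H => L H
  | n + 1, H => IsLWQNormal (NDegLWQNormal L n) H ⊤

/-- The isoperimetric constant `φ_S(X)` of a `G`-set `X` with respect to a finite `S ⊆ G`. -/
noncomputable def phiConst {G : Type*} [Group G] (S : Finset G) (X : Type*) [MulAction G X] :
    ℝ :=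
  sInf {r : ℝ | ∃ P : Finset X, P.Nonempty ∧
    r = (∑ s ∈ S, (((s • (P : Set X)) \ (P : Set X)).ncard : ℝ)) / (P.card : ℝ)}

/-!
Suppose the intersection is empty for some finite `F`. Let `A` be the set of points of `X` whose
stabilizer meets `H = G_x` in a finite group; then `k ∈ Q(H)` exactly when `k • x ∉ A`, and by
transitivity the translates `g • A`, `g ∈ F`, cover `X`. An invariant mean on `X` therefore gives
`A` positive mass, so the `H`-action on `A` is amenable and has finite stabilizers, and `H` is
amenable. Then `G` acts amenably on `X` with stabilizers conjugate to `H`, so `G` is amenable.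

Amenability passes from the stabilizers to the group by integrating, against the invariant mean
on the space, invariant means of the stabilizers moved to the corresponding cosets. The integral
of a `[0, 1]`-valued function against a finitely additive mean is squeezed between the step
functions `⌊n f⌋₊ / n` and `(⌊n f⌋₊ + 1) / n`, and step functions are compared on common
refinements of their partitions.
-/

theorem le_of_forall_le_add_div {a b C : ℝ} (h : ∀ n : ℕ, 0 < n → a ≤ b + C / n) : a ≤ b := by
  refine ge_of_tendsto ?_ ((Filter.eventually_gt_atTop 0).mono h)
  simpa using (tendsto_const_div_atTop_nhds_zero_nat C).const_add b

section Floor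

variable {n : ℕ} {a : ℝ}

theorem floor_mul_mem_range (ha : a ≤ 1) : ⌊n * a⌋₊ ∈ Finset.range (n + 1) :=
  Finset.mem_range_succ_iff.2 <| Nat.floor_le_of_le <| by
    simpa using mul_le_mul_of_nonneg_left ha n.cast_nonneg

theorem floor_mul_div_le (ha : 0 ≤ a) : (⌊n * a⌋₊ : ℝ) / n ≤ a := by
  rcases n.eq_zero_or_pos with rfl | hn
  · simpa using ha
  · rw [div_le_iff₀' (by positivity)]
    exact Nat.floor_le (by positivity)

theorem le_floor_mul_div_add (hn : 0 < n) (a : ℝ) : a ≤ (⌊n * a⌋₊ : ℝ) / n + 1 / n := by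
  rw [← add_div, le_div_iff₀' (by positivity)]
  exact (Nat.lt_floor_add_one _).le

end Floor

namespace Mean

open Finset

variable {Y Z : Type*} (m : Mean Y) {ι κ : Type*}

theorem measure_empty : m.m ∅ = 0 := by
  have := m.fin_add ∅ ∅ disjoint_bot_left
  simp only [Set.union_self] at this
  linarith

theorem measure_mono {A B : Set Y} (h : A ⊆ B) : m.m A ≤ m.m B := by
  have := m.fin_add A (B \ A) Set.disjoint_sdiff_right
  rw [Set.union_sdiff_cancel h] at this
  linarith [m.nonneg (B \ A)]

theorem measure_le_one (A : Set Y) : m.m A ≤ 1 :=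
  m.total ▸ m.measure_mono (Set.subset_univ A)

theorem measure_union_le (A B : Set Y) : m.m (A ∪ B) ≤ m.m A + m.m B := by
  rw [← Set.union_sdiff_self, m.fin_add A (B \ A) Set.disjoint_sdiff_right]
  linarith [m.measure_mono (Set.sdiff_subset : B \ A ⊆ B)]

theorem measure_biUnion_finset_le (s : Finset ι) (A : ι → Set Y) :
    m.m (⋃ i ∈ s, A i) ≤ ∑ i ∈ s, m.m (A i) := by
  classical
  induction s using Finset.induction_on with
  | empty => simp [m.measure_empty]
  | insert i s hi ih =>
    rw [set_biUnion_insert, sum_insert hi]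
    linarith [m.measure_union_le (A i) (⋃ j ∈ s, A j)]

theorem measure_biUnion_finset {s : Finset ι} {A : ι → Set Y}
    (hA : (s : Set ι).PairwiseDisjoint A) : m.m (⋃ i ∈ s, A i) = ∑ i ∈ s, m.m (A i) := by
  classical
  induction s using Finset.induction_on with
  | empty => simp [m.measure_empty]
  | insert i s hi ih =>
    rw [coe_insert] at hA
    rw [set_biUnion_insert, sum_insert hi, ← ih (hA.subset (Set.subset_insert _ _)),
      m.fin_add]
    refine Set.disjoint_iUnion₂_right.2 fun j hj => hA (by simp) (by simp [hj]) ?_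
    rintro rfl
    exact hi hj

theorem sum_measure_inter_fibre {t : Finset κ} {ρ : Y → κ} (hρ : ∀ y, ρ y ∈ t)
    (S : Set Y) : ∑ j ∈ t, m.m (S ∩ ρ ⁻¹' {j}) = m.m S := by
  rw [← m.measure_biUnion_finset]
  · congr 1
    ext y
    simpa using fun _ => hρ y
  · intro i _ j _ hij
    exact Disjoint.mono Set.inter_subset_right Set.inter_subset_right
      (Set.disjoint_singleton.2 hij |>.preimage ρ)

/-- The integral of the step function `v ∘ π`, where the finset `s` contains the range of `π`. -/
noncomputable def stepIntegral (s : Finset ι) (π : Y → ι) (v : ι → ℝ) : ℝ :=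
  ∑ i ∈ s, v i * m.m (π ⁻¹' {i})

theorem stepIntegral_le_stepIntegral {s : Finset ι} {t : Finset κ} {π : Y → ι} {ρ : Y → κ}
    {v : ι → ℝ} {w : κ → ℝ} (hπ : ∀ y, π y ∈ s) (hρ : ∀ y, ρ y ∈ t)
    (h : ∀ y, v (π y) ≤ w (ρ y)) : m.stepIntegral s π v ≤ m.stepIntegral t ρ w := by
  calc m.stepIntegral s π v = ∑ i ∈ s, ∑ j ∈ t, v i * m.m (π ⁻¹' {i} ∩ ρ ⁻¹' {j}) := by
        simp only [stepIntegral, ← mul_sum, m.sum_measure_inter_fibre hρ]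
    _ ≤ ∑ i ∈ s, ∑ j ∈ t, w j * m.m (π ⁻¹' {i} ∩ ρ ⁻¹' {j}) := by
        refine sum_le_sum fun i _ => sum_le_sum fun j _ => ?_
        rcases (π ⁻¹' {i} ∩ ρ ⁻¹' {j}).eq_empty_or_nonempty with hempty | ⟨y, rfl, rfl⟩
        · simp [hempty, m.measure_empty]
        · exact mul_le_mul_of_nonneg_right (h y) (m.nonneg _)
    _ = m.stepIntegral t ρ w := by
        rw [sum_comm]
        simp only [stepIntegral, ← mul_sum, Set.inter_comm (π ⁻¹' _), m.sum_measure_inter_fibre hπ]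

theorem stepIntegral_eq_stepIntegral {s : Finset ι} {t : Finset κ} {π : Y → ι} {ρ : Y → κ}
    {v : ι → ℝ} {w : κ → ℝ} (hπ : ∀ y, π y ∈ s) (hρ : ∀ y, ρ y ∈ t)
    (h : ∀ y, v (π y) = w (ρ y)) : m.stepIntegral s π v = m.stepIntegral t ρ w :=
  (m.stepIntegral_le_stepIntegral hπ hρ fun y => (h y).le).antisymm
    (m.stepIntegral_le_stepIntegral hρ hπ fun y => (h y).ge)

theorem stepIntegral_const {s : Finset ι} {π : Y → ι} (hπ : ∀ y, π y ∈ s) (c : ℝ) :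
    m.stepIntegral s π (fun _ => c) = c := by
  simpa [stepIntegral, ← mul_sum, m.total] using
    congrArg (c * ·) (m.sum_measure_inter_fibre hπ Set.univ)

theorem stepIntegral_add_const {s : Finset ι} {π : Y → ι} (hπ : ∀ y, π y ∈ s) (v : ι → ℝ)
    (c : ℝ) : m.stepIntegral s π (fun i => v i + c) = m.stepIntegral s π v + c := by
  have hc := m.stepIntegral_const hπ c
  unfold stepIntegral at hc ⊢
  simp only [add_mul, sum_add_distrib, hc]

theorem stepIntegral_add {s : Finset ι} {t : Finset κ} {π : Y → ι} {ρ : Y → κ}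
    (hπ : ∀ y, π y ∈ s) (hρ : ∀ y, ρ y ∈ t) (v : ι → ℝ) (w : κ → ℝ) :
    m.stepIntegral s π v + m.stepIntegral t ρ w =
      m.stepIntegral (s ×ˢ t) (fun y => (π y, ρ y)) (fun p => v p.1 + w p.2) := by
  have hπρ : ∀ y, (π y, ρ y) ∈ s ×ˢ t := fun y => mem_product.2 ⟨hπ y, hρ y⟩
  rw [m.stepIntegral_eq_stepIntegral hπ hπρ (w := fun p => v p.1) fun _ => rfl,
    m.stepIntegral_eq_stepIntegral hρ hπρ (w := fun p => w p.2) fun _ => rfl]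
  simp only [stepIntegral, add_mul, sum_add_distrib]

theorem stepIntegral_comp {s : Finset ι} (π : Y → ι) (v : ι → ℝ) {φ : Y → Y}
    (hφ : ∀ S, m.m (φ ⁻¹' S) = m.m S) : m.stepIntegral s (π ∘ φ) v = m.stepIntegral s π v := by
  simp only [stepIntegral, Set.preimage_comp, hφ]

/-- The level sets of `⌊n f⌋₊` are indexed by `range (n + 1)` only when `0 ≤ f ≤ 1`. -/
noncomputable def lowerSum (n : ℕ) (f : Y → ℝ) : ℝ :=
  m.stepIntegral (range (n + 1)) (fun y => ⌊n * f y⌋₊) (fun k => k / n)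

/-- Meaningful only for functions with values in `[0, 1]`. -/
noncomputable def integral (f : Y → ℝ) : ℝ :=
  ⨆ n : ℕ, m.lowerSum (n + 1) f

variable {f : Y → ℝ}

theorem integral_le_stepIntegral (hf0 : ∀ y, 0 ≤ f y) (hf1 : ∀ y, f y ≤ 1) {t : Finset κ}
    {ρ : Y → κ} {w : κ → ℝ} (hρ : ∀ y, ρ y ∈ t) (h : ∀ y, f y ≤ w (ρ y)) :
    m.integral f ≤ m.stepIntegral t ρ w :=
  ciSup_le fun _ => m.stepIntegral_le_stepIntegral (fun y => floor_mul_mem_range (hf1 y)) hρ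
    fun y => (floor_mul_div_le (hf0 y)).trans (h y)

theorem integral_le_lowerSum_add (hf0 : ∀ y, 0 ≤ f y) (hf1 : ∀ y, f y ≤ 1) {n : ℕ}
    (hn : 0 < n) : m.integral f ≤ m.lowerSum n f + 1 / n := by
  have hπ : ∀ y, ⌊n * f y⌋₊ ∈ range (n + 1) := fun y => floor_mul_mem_range (hf1 y)
  rw [lowerSum, ← m.stepIntegral_add_const hπ]
  exact m.integral_le_stepIntegral hf0 hf1 hπ fun y => le_floor_mul_div_add hn (f y)

theorem lowerSum_le_one (hf0 : ∀ y, 0 ≤ f y) (hf1 : ∀ y, f y ≤ 1) (n : ℕ) :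
    m.lowerSum n f ≤ 1 := by
  rw [← m.stepIntegral_const (s := {()}) (π := fun _ => ()) (by simp) 1]
  exact m.stepIntegral_le_stepIntegral (fun y => floor_mul_mem_range (hf1 y)) (by simp)
    fun y => (floor_mul_div_le (hf0 y)).trans (hf1 y)

theorem lowerSum_le_integral (hf0 : ∀ y, 0 ≤ f y) (hf1 : ∀ y, f y ≤ 1) {n : ℕ} (hn : 0 < n) :
    m.lowerSum n f ≤ m.integral f := by
  obtain ⟨k, rfl⟩ := Nat.exists_eq_succ_of_ne_zero hn.ne'
  exact le_ciSup ⟨1, Set.forall_mem_range.2 fun n => m.lowerSum_le_one hf0 hf1 (n + 1)⟩ k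

theorem stepIntegral_le_integral (hf0 : ∀ y, 0 ≤ f y) (hf1 : ∀ y, f y ≤ 1) {ι : Type*}
    {s : Finset ι} {π : Y → ι} {v : ι → ℝ} (hπ : ∀ y, π y ∈ s) (h : ∀ y, v (π y) ≤ f y) :
    m.stepIntegral s π v ≤ m.integral f := by
  refine le_of_forall_le_add_div (C := 1) fun n hn => ?_
  have hπn : ∀ y, ⌊n * f y⌋₊ ∈ range (n + 1) := fun y => floor_mul_mem_range (hf1 y)
  calc m.stepIntegral s π v ≤ m.lowerSum n f + 1 / n := by
        rw [lowerSum, ← m.stepIntegral_add_const hπn]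
        exact m.stepIntegral_le_stepIntegral hπ hπn fun y =>
          (h y).trans (le_floor_mul_div_add hn (f y))
    _ ≤ m.integral f + 1 / n := by grw [m.lowerSum_le_integral hf0 hf1 hn]

theorem integral_nonneg (hf0 : ∀ y, 0 ≤ f y) (hf1 : ∀ y, f y ≤ 1) : 0 ≤ m.integral f := by
  simpa [m.stepIntegral_const (s := {()}) (π := fun _ => ())] using
    m.stepIntegral_le_integral (s := {()}) (π := fun _ => ()) (v := fun _ => 0) hf0 hf1
      (by simp) hf0

theorem integral_const {c : ℝ} (hc0 : 0 ≤ c) (hc1 : c ≤ 1) : m.integral (fun _ => c) = c := by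
  have hπ : ∀ _ : Y, () ∈ ({()} : Finset Unit) := fun _ => mem_singleton_self _
  conv_rhs => rw [← m.stepIntegral_const hπ c]
  exact le_antisymm
    (m.integral_le_stepIntegral (w := fun _ => c) (fun _ => hc0) (fun _ => hc1) hπ
      fun _ => le_rfl)
    (m.stepIntegral_le_integral (v := fun _ => c) (fun _ => hc0) (fun _ => hc1) hπ
      fun _ => le_rfl)

/-- Both inequalities compare `f + g` with step functions on the common refinement of the
level sets of `⌊n f⌋₊` and `⌊n g⌋₊`, which approximate `f + g` up to `2 / n`. -/
theorem integral_add {f g : Y → ℝ} (hf0 : ∀ y, 0 ≤ f y) (hg0 : ∀ y, 0 ≤ g y)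
    (hfg1 : ∀ y, f y + g y ≤ 1) :
    m.integral (fun y => f y + g y) = m.integral f + m.integral g := by
  have hf1 : ∀ y, f y ≤ 1 := fun y => by linarith [hg0 y, hfg1 y]
  have hg1 : ∀ y, g y ≤ 1 := fun y => by linarith [hf0 y, hfg1 y]
  have hfg0 : ∀ y, 0 ≤ f y + g y := fun y => add_nonneg (hf0 y) (hg0 y)
  have hπ : ∀ n : ℕ, ∀ y, ⌊n * f y⌋₊ ∈ range (n + 1) := fun _ y => floor_mul_mem_range (hf1 y)
  have hρ : ∀ n : ℕ, ∀ y, ⌊n * g y⌋₊ ∈ range (n + 1) := fun _ y => floor_mul_mem_range (hg1 y)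
  have hπρ : ∀ n : ℕ, ∀ y, (⌊n * f y⌋₊, ⌊n * g y⌋₊) ∈ range (n + 1) ×ˢ range (n + 1) :=
    fun n y => mem_product.2 ⟨hπ n y, hρ n y⟩
  have two_div_eq_add : ∀ n : ℕ, (2 : ℝ) / n = 1 / n + 1 / n := fun n => by ring
  have lower : ∀ n : ℕ, m.lowerSum n f + m.lowerSum n g ≤ m.integral (fun y => f y + g y) := by
    intro n
    rw [lowerSum, lowerSum, m.stepIntegral_add (hπ n) (hρ n)]
    exact m.stepIntegral_le_integral hfg0 hfg1 (hπρ n) fun y =>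
      add_le_add (floor_mul_div_le (hf0 y)) (floor_mul_div_le (hg0 y))
  have upper : ∀ n : ℕ, 0 < n →
      m.integral (fun y => f y + g y) ≤ m.lowerSum n f + m.lowerSum n g + 2 / n := by
    intro n hn
    have hsplit := m.stepIntegral_add (hπ n) (hρ n) (fun k : ℕ => (k : ℝ) / n + 1 / n)
      (fun k : ℕ => (k : ℝ) / n + 1 / n)
    rw [m.stepIntegral_add_const (hπ n), m.stepIntegral_add_const (hρ n)] at hsplit
    have := m.integral_le_stepIntegral hfg0 hfg1 (hπρ n)
      (w := fun p : ℕ × ℕ => (p.1 : ℝ) / n + 1 / n + ((p.2 : ℝ) / n + 1 / n)) fun y =>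
      add_le_add (le_floor_mul_div_add hn (f y)) (le_floor_mul_div_add hn (g y))
    rw [lowerSum, lowerSum]
    linarith [two_div_eq_add n]
  apply le_antisymm
  · refine le_of_forall_le_add_div (C := 2) fun n hn => ?_
    linarith [upper n hn, m.lowerSum_le_integral hf0 hf1 hn, m.lowerSum_le_integral hg0 hg1 hn]
  · refine le_of_forall_le_add_div (C := 2) fun n hn => ?_
    linarith [lower n, m.integral_le_lowerSum_add hf0 hf1 hn,
      m.integral_le_lowerSum_add hg0 hg1 hn, two_div_eq_add n]

theorem integral_comp {f : Y → ℝ} {φ : Y → Y} (hφ : ∀ S, m.m (φ ⁻¹' S) = m.m S) :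
    m.integral (f ∘ φ) = m.integral f := by
  simp only [integral, lowerSum]
  congr! 2 with n
  exact m.stepIntegral_comp (fun y => ⌊((n + 1 : ℕ) : ℝ) * f y⌋₊) _ hφ

def map (f : Y → Z) : Mean Z where
  m B := m.m (f ⁻¹' B)
  nonneg _ := m.nonneg _
  total := m.total
  fin_add _ _ h := m.fin_add _ _ (h.preimage f)

noncomputable def restrict (A : Set Y) (hA : 0 < m.m A) : Mean A where
  m S := m.m (Subtype.val '' S) / m.m A
  nonneg _ := div_nonneg (m.nonneg _) hA.le
  total := by rw [Set.image_univ, Subtype.range_coe, div_self hA.ne']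
  fin_add S T h := by
    rw [Set.image_union, m.fin_add _ _ ((Set.disjoint_image_iff Subtype.val_injective).2 h),
      add_div]

noncomputable def bind (ρ : Y → Mean Z) : Mean Z where
  m B := m.integral fun y => (ρ y).m B
  nonneg B := m.integral_nonneg (fun y => (ρ y).nonneg B) fun y => (ρ y).measure_le_one B
  total := by simp only [Mean.total, m.integral_const zero_le_one le_rfl]
  fin_add B C h := by
    simp only [(ρ _).fin_add B C h]
    exact m.integral_add (fun y => (ρ y).nonneg B) (fun y => (ρ y).nonneg C) fun y =>
      (ρ y).fin_add B C h ▸ (ρ y).measure_le_one _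

end Mean

section Amenability

variable {K : Type*} [Group K]

theorem AmenableGroup.of_finite [Finite K] : AmenableGroup K := by
  have hK : (0 : ℝ) < Nat.card K := by exact_mod_cast Nat.card_pos
  refine ⟨⟨fun B => B.ncard / Nat.card K, fun B => by positivity, ?_, fun B C h => ?_⟩,
    fun g B => ?_⟩
  · simp only [Set.ncard_univ, div_self hK.ne']
  · simp only [Set.ncard_union_eq h (Set.toFinite B) (Set.toFinite C), Nat.cast_add, add_div]
  · simp only [Set.ncard_image_of_injective B (mul_right_injective g)]

theorem AmenableGroup.of_surjective {K' : Type*} [Group K'] (f : K →* K')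
    (hf : Function.Surjective f) (hK : AmenableGroup K) : AmenableGroup K' := by
  obtain ⟨m, hm⟩ := hK
  refine ⟨m.map f, fun g' B => ?_⟩
  obtain ⟨g, rfl⟩ := hf g'
  have : f ⁻¹' ((f g * ·) '' B) = (g * ·) '' (f ⁻¹' B) := by
    simp only [Set.image_mul_left]
    ext
    simp
  exact congrArg m.m this |>.trans (hm g _)

theorem AmenableGroup.exists_mean_subgroup_invariant {L : Subgroup K} (hL : AmenableGroup L) :
    ∃ μ : Mean K, ∀ h ∈ L, ∀ B : Set K, μ.m ((h * ·) ⁻¹' B) = μ.m B := by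
  obtain ⟨μ, hμ⟩ := hL
  refine ⟨μ.map Subtype.val, fun h hh B => ?_⟩
  change μ.m (((⟨h, hh⟩ : L) * ·) ⁻¹' (Subtype.val ⁻¹' B)) = μ.m (Subtype.val ⁻¹' B)
  rw [← Set.image_mul_left', hμ]

variable {Y Z : Type*} [MulAction K Y]

theorem MeanInvariant.bind [MulAction K Z] {m : Mean Y} (hm : MeanInvariant K m)
    {ρ : Y → Mean Z} (hρ : ∀ (g : K) y B, (ρ (g • y)).m ((g • ·) '' B) = (ρ y).m B) :
    MeanInvariant K (m.bind ρ) := by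
  intro g B
  have hφ : ∀ S, m.m ((g⁻¹ • ·) ⁻¹' S) = m.m S := fun S => by
    rw [Set.preimage_smul_inv, ← Set.image_smul, hm]
  calc (m.bind ρ).m ((g • ·) '' B) = m.integral ((fun y => (ρ y).m B) ∘ (g⁻¹ • ·)) := by
        refine congrArg m.integral (funext fun y => ?_)
        simpa using hρ g (g⁻¹ • y) B
    _ = (m.bind ρ).m B := m.integral_comp hφ

theorem MeanInvariant.amenableAction_subMulAction {m : Mean Y} (hm : MeanInvariant K m)
    (p : SubMulAction K Y) (hp : 0 < m.m p) : AmenableAction K p := by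
  refine ⟨m.restrict p hp, fun g S => ?_⟩
  change m.m (Subtype.val '' ((g • ·) '' S)) / _ = m.m (Subtype.val '' S) / _
  rw [Set.image_image, ← hm g (Subtype.val '' S), Set.image_image]
  rfl

open MulAction in
/-- The invariant mean on `K` integrates, over `y ∈ Y`, an invariant mean of the stabilizer of
a fixed point `r y` of the orbit of `y`, transported to the coset `{k | k • r y = y}`. -/
theorem AmenableGroup.of_amenableAction (hY : AmenableAction K Y)
    (hstab : ∀ y : Y, AmenableGroup (stabilizer K y)) : AmenableGroup K := by
  obtain ⟨m, hm⟩ := hY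
  choose μ hμ using fun y => (hstab y).exists_mean_subgroup_invariant
  let r : Y → Y := fun y => (Quotient.mk (orbitRel K Y) y).out
  have hr : ∀ (g : K) y, r (g • y) = r y := fun g y =>
    congrArg Quotient.out (Quotient.sound (mem_orbit y g))
  have hrep : ∀ y, ∃ t : K, t • r y = y := fun y =>
    mem_orbit_iff.1 (Quotient.exact (Quotient.out_eq (Quotient.mk (orbitRel K Y) y)).symm)
  choose t ht using hrep
  refine ⟨m.bind fun y => (μ (r y)).map (t y * ·), hm.bind fun g y B => ?_⟩
  have hmem : (t y)⁻¹ * g⁻¹ * t (g • y) ∈ stabilizer K (r y) := by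
    have hgy : t (g • y) • r y = g • y := hr g y ▸ ht (g • y)
    rw [mem_stabilizer_iff, mul_smul, mul_smul, hgy, inv_smul_smul, inv_smul_eq_iff, ht]
  change (μ (r (g • y))).m _ = (μ (r y)).m _
  rw [hr, ← hμ (r y) _ hmem ((t y * ·) ⁻¹' B)]
  congr 1
  ext k
  simp only [smul_eq_mul, Set.image_mul_left, Set.mem_preimage]
  group

theorem MeanInvariant.measure_pos_of_iUnion_smul_eq_univ {m : Mean Y} (hm : MeanInvariant K m)
    {A : Set Y} {F : Finset K} (hF : ⋃ g ∈ F, g • A = Set.univ) : 0 < m.m A := by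
  have : 1 ≤ F.card * m.m A :=
    calc 1 = m.m (⋃ g ∈ F, g • A) := by rw [hF, m.total]
      _ ≤ ∑ g ∈ F, m.m (g • A) := m.measure_biUnion_finset_le _ _
      _ = ∑ _g ∈ F, m.m A := Finset.sum_congr rfl fun g _ => by rw [← Set.image_smul, hm]
      _ = F.card * m.m A := by rw [Finset.sum_const, nsmul_eq_mul]
  exact pos_of_mul_pos_right (by linarith) (Nat.cast_nonneg _)

end Amenability

section Stabilizers

open MulAction

variable {G X : Type*} [Group G] [MulAction G X]

theorem stabilizer_smul_inf_stabilizer_smul (g : G) (x y : X) :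
    stabilizer G (g • x) ⊓ stabilizer G (g • y) =
      (stabilizer G x ⊓ stabilizer G y).map (MulAut.conj g).toMonoidHom := by
  rw [Subgroup.map_inf _ _ _ (MulAut.conj g).injective, stabilizer_smul_eq_stabilizer_map_conj,
    stabilizer_smul_eq_stabilizer_map_conj]

variable (G) in
def finiteStabilizerMeet (x : X) :
    SubMulAction (stabilizer G x) X where
  carrier := {y | ((stabilizer G x ⊓ stabilizer G y : Subgroup G) : Set G).Finite}
  smul_mem' s y hy := by
    have hconj := stabilizer_smul_inf_stabilizer_smul (s : G) x y
    rw [mem_stabilizer_iff.1 s.2] at hconj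
    change ((stabilizer G x ⊓ stabilizer G ((s : G) • y) : Subgroup G) : Set G).Finite
    rw [hconj, Subgroup.coe_map]
    exact hy.image _

theorem finite_stabilizer_finiteStabilizerMeet {x : X} (y : finiteStabilizerMeet G x) :
    Finite (stabilizer (stabilizer G x) y) := by
  have : Finite (stabilizer G x ⊓ stabilizer G (y : X) : Subgroup G) := y.2.to_subtype
  refine Finite.of_injective
    (fun s => (⟨s.1, s.1.2, congrArg Subtype.val s.2⟩ : ↥(stabilizer G x ⊓ stabilizer G (y : X))))
    fun s s' h => Subtype.ext (Subtype.ext (by simpa using congrArg Subtype.val h))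

theorem smul_notMem_finiteStabilizerMeet_iff {x : X} {k : G} :
    k • x ∉ finiteStabilizerMeet G x ↔
      ((stabilizer G x ⊓ (stabilizer G x).map (MulAut.conj k).toMonoidHom : Subgroup G) :
        Set G).Infinite := by
  rw [← stabilizer_smul_eq_stabilizer_map_conj]
  rfl

end Stabilizers

theorem Q_stabilizer_thick_general {G : Type*} [Group G]
    (hG : ¬ AmenableGroup G) {X : Type*} [MulAction G X] [MulAction.IsPretransitive G X]
    (hamen : AmenableAction G X) (x : X) :
    ∀ F : Finset G,
      (⋂ g ∈ F, (fun h => g * h) ''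
        {k : G | ((MulAction.stabilizer G x ⊓
            Subgroup.map (MulAut.conj k).toMonoidHom (MulAction.stabilizer G x) :
              Subgroup G) : Set G).Infinite}).Nonempty := by
  intro F
  obtain ⟨m, hm⟩ := hamen
  let A := finiteStabilizerMeet G x
  by_contra hempty
  have hcover : ⋃ g ∈ F, g • (A : Set X) = Set.univ := by
    refine Set.eq_univ_of_forall fun y => ?_
    obtain ⟨h, rfl⟩ := MulAction.exists_smul_eq G x y
    by_contra hy
    refine hempty ⟨h, Set.mem_iInter₂.2 fun g hg =>
      ⟨g⁻¹ * h, smul_notMem_finiteStabilizerMeet_iff.1 ?_, mul_inv_cancel_left g h⟩⟩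
    rw [mul_smul]
    exact fun hA => hy (Set.mem_biUnion hg (Set.mem_smul_set_iff_inv_smul_mem.2 hA))
  have hmH : MeanInvariant (MulAction.stabilizer G x) m := fun s => hm s
  have hH : AmenableGroup (MulAction.stabilizer G x) :=
    .of_amenableAction (hmH.amenableAction_subMulAction A
      (hm.measure_pos_of_iUnion_smul_eq_univ hcover))
      fun y => have := finite_stabilizer_finiteStabilizerMeet y; .of_finite
  refine hG (.of_amenableAction ⟨m, hm⟩ fun y => ?_)
  obtain ⟨h, rfl⟩ := MulAction.exists_smul_eq G x y
  rw [MulAction.stabilizer_smul_eq_stabilizer_map_conj]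
  exact hH.of_surjective _ (MonoidHom.subgroupMap_surjective _ _)

/-- Lemma: for a transitive amenable action of a nonamenable group `G` with stabilizer
`H = G_x`, the set `Q(H) = {g : H ∩ gHg⁻¹ infinite}` is thick in `G`. -/
theorem Q_stabilizer_thick {G : Type*} [Group G] [Countable G]
    (hG : ¬ AmenableGroup G) {X : Type*} [MulAction G X] [MulAction.IsPretransitive G X]
    (hamen : AmenableAction G X) (x : X) :
    ∀ F : Finset G,
      (⋂ g ∈ F, (fun h => g * h) ''
        {k : G | ((MulAction.stabilizer G x ⊓
            Subgroup.map (MulAut.conj k).toMonoidHom (MulAction.stabilizer G x) :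
              Subgroup G) : Set G).Infinite}).Nonempty :=
  Q_stabilizer_thick_general hG hamen x
end

section
/- Let G be a countable group acting on a set X, let S be a finite subset of G, let n ≥ 1 and ε > 0. Let P ⊆ X be an (S,ε)-invariant set which is contained in a single G-orbit and satisfies |P| ≥ n. Then P^{⊛n} is (S, nε)-invariant in X^{⊛n}. -/
/-!
Write `Q` for the set of injective `n`-tuples with entries in `P`; for `P` inside one orbit this is
`P^{⊛n}`. Then `s • Q` is the set of injective tuples with entries in `sP`, so a tuple of
`sQ \ Q` has some coordinate in `sP \ P`. Transpositions of `sP` permute its injective tuples,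
so every fibre of evaluation at a fixed coordinate has `|Q| / |P|` elements. Summing over the `n`
coordinates gives `|sQ \ Q| ≤ n |sP \ P| |Q| / |P|`, and summing over `s ∈ S` gives the claim.
-/

open Pointwise

/-- `P` is an `(S,ε)`-invariant subset of the `G`-set `X`: a nonempty finite set with
`Σ_{s ∈ S} |sP \\ P| < ε|P|`. -/
def SInvariant {G : Type*} [Group G] {X : Type*} [MulAction G X] (S : Finset G) (ε : ℝ)
    (P : Set X) : Prop :=
  P.Finite ∧ P.Nonempty ∧
    (∑ s ∈ S, (((s • P) \ P).ncard : ℝ)) < ε * (P.ncard : ℝ)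

open Function

def injTuples {X : Type*} (ι : Type*) (P : Set X) : Set (ι → X) :=
  {x | Injective x ∧ ∀ i, x i ∈ P}

section injTuples

variable {X ι : Type*}

theorem injTuples_finite [Finite ι] {P : Set X} (hP : P.Finite) : (injTuples ι P).Finite :=
  (Set.Finite.pi' fun _ : ι => hP).subset fun _ hx i => hx.2 i

theorem injTuples_nonempty [Fintype ι] {P : Set X} (hP : P.Finite)
    (h : Fintype.card ι ≤ P.ncard) : (injTuples ι P).Nonempty := by
  have := hP.fintype
  rw [← Nat.card_coe_set_eq, Nat.card_eq_fintype_card] at h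
  obtain ⟨f⟩ := Function.Embedding.nonempty_of_card_le h
  exact ⟨fun i => (f i : X), fun i j hij => f.injective (Subtype.ext hij), fun i => (f i).2⟩

theorem smul_injTuples {G : Type*} [Group G] [MulAction G X] (g : G) (P : Set X) :
    g • injTuples ι P = injTuples ι (g • P) := by
  ext x
  simp only [Set.mem_smul_set_iff_inv_smul_mem, injTuples, Set.mem_ofPred_eq, Pi.smul_apply]
  exact and_congr_left' ((MulAction.injective g⁻¹).of_comp_iff x)

theorem ncard_injTuples_eval_eq_le {P : Set X} (hP : P.Finite) [Finite ι] (i : ι) {a b : X}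
    (ha : a ∈ P) (hb : b ∈ P) :
    {x ∈ injTuples ι P | x i = a}.ncard ≤ {x ∈ injTuples ι P | x i = b}.ncard := by
  classical
  have swap_mem : ∀ y ∈ P, Equiv.swap a b y ∈ P := fun y hy => by
    rw [Equiv.swap_apply_def]; split_ifs <;> assumption
  refine Set.ncard_le_ncard_of_injOn (fun x => Equiv.swap a b ∘ x) ?_ ?_
    ((injTuples_finite hP).subset fun _ hx => hx.1)
  · rintro x ⟨⟨hinj, hmem⟩, rfl⟩
    exact ⟨⟨(Equiv.injective _).comp hinj, fun j => swap_mem _ (hmem j)⟩,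
      Equiv.swap_apply_left _ _⟩
  · exact (Equiv.injective _).comp_left.injOn

theorem ncard_injTuples_eval_mem_mul {P A : Set X} (hP : P.Finite) [Finite ι] (i : ι)
    (hA : A ⊆ P) :
    {x ∈ injTuples ι P | x i ∈ A}.ncard * P.ncard = A.ncard * (injTuples ι P).ncard := by
  rcases P.eq_empty_or_nonempty with rfl | ⟨a₀, ha₀⟩
  · simp [Set.subset_empty_iff.mp hA]
  set c := {x ∈ injTuples ι P | x i = a₀}.ncard
  have fiber_eq : ∀ a ∈ P, {x ∈ injTuples ι P | x i = a}.ncard = c := fun a ha =>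
    (ncard_injTuples_eval_eq_le hP i ha ha₀).antisymm (ncard_injTuples_eval_eq_le hP i ha₀ ha)
  have count : ∀ B ⊆ P, {x ∈ injTuples ι P | x i ∈ B}.ncard = B.ncard * c := by
    intro B hB
    have hBfin := hP.subset hB
    have hunion :
        {x ∈ injTuples ι P | x i ∈ B} = ⋃ a ∈ B, {x ∈ injTuples ι P | x i = a} := by
      ext; simp
    have hdisj : B.PairwiseDisjoint fun a => {x ∈ injTuples ι P | x i = a} :=
      fun a _ b _ hab => Set.disjoint_left.2 fun x hxa hxb => hab (hxa.2.symm.trans hxb.2)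
    have hfib_fin : ∀ a ∈ B, {x ∈ injTuples ι P | x i = a}.Finite := fun _ _ =>
      (injTuples_finite hP).subset fun _ hx => hx.1
    rw [hunion, hBfin.ncard_biUnion hfib_fin hdisj,
      finsum_mem_congr rfl fun a ha => fiber_eq a (hB ha),
      finsum_mem_eq_finite_toFinset_sum _ hBfin, Finset.sum_const, smul_eq_mul,
      Set.ncard_eq_toFinset_card B hBfin]
  have hQ : (injTuples ι P).ncard = P.ncard * c := by
    rw [← count P subset_rfl]
    congr
    ext x
    exact ⟨fun hx => ⟨hx, hx.2 i⟩, fun hx => hx.1⟩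
  rw [count A hA, hQ]
  ring

theorem injTuples_diff_subset (P P' : Set X) :
    injTuples ι P' \ injTuples ι P ⊆ ⋃ i, {x ∈ injTuples ι P' | x i ∈ P' \ P} := by
  rintro x ⟨hx', hx⟩
  obtain ⟨i, hi⟩ := not_forall.mp fun h => hx ⟨hx'.1, h⟩
  exact Set.mem_iUnion.2 ⟨i, hx', hx'.2 i, hi⟩

theorem ncard_smul_injTuples_diff_mul_le [Fintype ι] {G : Type*} [Group G] [MulAction G X]
    (g : G) {P : Set X} (hP : P.Finite) :
    ((g • injTuples ι P) \ injTuples ι P).ncard * P.ncard ≤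
      Fintype.card ι * ((g • P) \ P).ncard * (injTuples ι P).ncard := by
  have hgP : (g • P).Finite := hP.smul_set
  rw [smul_injTuples]
  calc _ ≤ (⋃ i, {x ∈ injTuples ι (g • P) | x i ∈ g • P \ P}).ncard * P.ncard :=
        Nat.mul_le_mul_right _ <| Set.ncard_le_ncard (injTuples_diff_subset _ _) <|
          Set.finite_iUnion fun _ => (injTuples_finite hgP).subset fun _ hx => hx.1
    _ ≤ (∑ i, {x ∈ injTuples ι (g • P) | x i ∈ g • P \ P}.ncard) * P.ncard :=
        Nat.mul_le_mul_right _ (Set.ncard_iUnion_le_of_fintype _)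
    _ = ∑ _i : ι, ((g • P) \ P).ncard * (injTuples ι P).ncard := by
        rw [Finset.sum_mul]
        refine Finset.sum_congr rfl fun i _ => ?_
        rw [← Set.ncard_smul_set g P, ncard_injTuples_eval_mem_mul hgP i Set.sdiff_subset,
          ← smul_injTuples, Set.ncard_smul_set]
    _ = _ := by simp [mul_assoc]

theorem setOf_distinct_sameOrbit_eq_injTuples {G : Type*} [Group G] [MulAction G X] {P : Set X}
    (horb : ∀ x ∈ P, ∀ y ∈ P, MulAction.orbit G x = MulAction.orbit G y) :
    {x : ι → X | (∀ i j, i ≠ j → x i ≠ x j) ∧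
      (∀ i j, MulAction.orbit G (x i) = MulAction.orbit G (x j)) ∧ ∀ i, x i ∈ P} =
      injTuples ι P := by
  ext x
  refine ⟨fun ⟨hne, _, hmem⟩ => ⟨fun i j hij => not_imp_not.mp (hne i j) hij, hmem⟩,
    fun ⟨hinj, hmem⟩ =>
      ⟨fun _ _ hij => hinj.ne hij, fun i j => horb _ (hmem i) _ (hmem j), hmem⟩⟩

end injTuples

theorem SInvariant.injTuples {G X ι : Type*} [Group G] [MulAction G X] [Fintype ι] [Nonempty ι]
    {S : Finset G} {ε : ℝ} {P : Set X} (hP : SInvariant S ε P)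
    (hcard : Fintype.card ι ≤ P.ncard) :
    SInvariant S (Fintype.card ι * ε) (injTuples ι P) := by
  obtain ⟨hPfin, -, hPsum⟩ := hP
  set Q := _root_.injTuples ι P
  have hQne : Q.Nonempty := injTuples_nonempty hPfin hcard
  have hPpos : (0 : ℝ) < P.ncard := by
    exact_mod_cast Fintype.card_pos.trans_le hcard
  have hQpos : (0 : ℝ) < Q.ncard := by
    exact_mod_cast (Set.ncard_pos (injTuples_finite hPfin)).2 hQne
  refine ⟨injTuples_finite hPfin, hQne, lt_of_mul_lt_mul_right ?_ hPpos.le⟩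
  calc (∑ g ∈ S, (((g • Q) \ Q).ncard : ℝ)) * P.ncard
      ≤ ∑ g ∈ S, (Fintype.card ι * ((g • P) \ P).ncard * Q.ncard : ℝ) := by
        rw [Finset.sum_mul]
        refine Finset.sum_le_sum fun g _ => ?_
        exact_mod_cast ncard_smul_injTuples_diff_mul_le g hPfin
    _ = Fintype.card ι * Q.ncard * ∑ g ∈ S, (((g • P) \ P).ncard : ℝ) := by
        rw [Finset.mul_sum]
        exact Finset.sum_congr rfl fun _ _ => by ring
    _ < Fintype.card ι * Q.ncard * (ε * P.ncard) := by
        gcongr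
    _ = Fintype.card ι * ε * Q.ncard * P.ncard := by ring

theorem diag_tuples_invariant_general {G : Type*} [Group G] {X : Type*}
    [MulAction G X] (S : Finset G) (n : ℕ) (hn : 1 ≤ n) (ε : ℝ)
    (P : Set X) (hP : SInvariant S ε P)
    (horb : ∀ x ∈ P, ∀ y ∈ P, MulAction.orbit G x = MulAction.orbit G y)
    (hcard : n ≤ P.ncard) :
    SInvariant S ((n : ℝ) * ε)
      {x : Fin n → X | (∀ i j, i ≠ j → x i ≠ x j) ∧
        (∀ i j, MulAction.orbit G (x i) = MulAction.orbit G (x j)) ∧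
        ∀ i, x i ∈ P} := by
  have : Nonempty (Fin n) := ⟨⟨0, hn⟩⟩
  rw [setOf_distinct_sameOrbit_eq_injTuples horb]
  simpa using hP.injTuples (ι := Fin n) (by simpa using hcard)

/-- Lemma: if `P ⊆ X` is `(S,ε)`-invariant, lies in a single `G`-orbit and `|P| ≥ n`, then
`P^{⊛n}` (the distinct `n`-tuples from `P`, inside `X^{⊛n}`, with the diagonal action) is
`(S, nε)`-invariant. -/
theorem diag_tuples_invariant {G : Type*} [Group G] [Countable G] {X : Type*}
    [MulAction G X] (S : Finset G) (n : ℕ) (hn : 1 ≤ n) (ε : ℝ) (hε : 0 < ε)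
    (P : Set X) (hP : SInvariant S ε P)
    (horb : ∀ x ∈ P, ∀ y ∈ P, MulAction.orbit G x = MulAction.orbit G y)
    (hcard : n ≤ P.ncard) :
    SInvariant S ((n : ℝ) * ε)
      {x : Fin n → X | (∀ i j, i ≠ j → x i ≠ x j) ∧
        (∀ i j, MulAction.orbit G (x i) = MulAction.orbit G (x j)) ∧
        ∀ i, x i ∈ P} :=
  diag_tuples_invariant_general S n hn ε P hP horb hcard
end

section
/- Let G be a countable group generated by a finite set S, let X be a G-set, and let H be a subgroup of G such that the restricted action H ↷ X is amenable. Then φ_S(G/H) ≥ φ_S(X), where G acts on the coset space G/H by left translation. -/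
open Pointwise

/-!
Averaging the `H`-invariant mean over representatives of a finite set `P ⊆ G ⧸ H` gives a mean
`ν` on `X` with `ν (s⁻¹ • A) ≤ ν A + |s • P \ P| / |P|`. Day's argument turns such an almost
invariant mean into almost invariant finite sets: separate the ball of radius `2ρ` in `ℓ¹(G × X)`
from the convex hull of the displacement vectors `∑ s, (δ_{(s, s • x)} - δ_{(s, x)})`. If they are
disjoint, Hahn–Banach yields functions `u s : X → [0, 1]` with `∑ s, (u s (s • x) - u s x) ≥ ρ`
everywhere, which integrating against `ν` level set by level set rules out once
`ρ > ∑ s, |s • P \ P| / |P|`. Otherwise a finitely supported probability on `X` has total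
variation `< 2ρ`, and by the co-area inequality one of its level sets `Q` satisfies
`∑ s, |s • Q \ Q| ≤ ρ |Q|`.
-/

open Finset

lemma sum_range_ite_lt_floor (k : ℕ) {t : ℝ} (ht : t ≤ 1) :
    ∑ j ∈ range k, (if j < ⌊k * t⌋₊ then 1 else 0 : ℝ) = ⌊k * t⌋₊ := by
  have hk : ⌊k * t⌋₊ ≤ k := Nat.floor_le_of_le (by nlinarith [k.cast_nonneg (α := ℝ)])
  rw [sum_boole, show (range k).filter (· < ⌊k * t⌋₊) = range ⌊k * t⌋₊ by ext; simp; omega,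
    card_range]

namespace Mean

variable {X : Type*} (μ : Mean X)

lemma m_empty : μ.m ∅ = 0 := by
  simpa using (μ.fin_add ∅ ∅ (by simp)).symm

lemma m_mono {A B : Set X} (h : A ⊆ B) : μ.m A ≤ μ.m B := by
  have := μ.fin_add A (B \ A) disjoint_sdiff_self_right
  rw [Set.union_sdiff_cancel h] at this
  linarith [μ.nonneg (B \ A)]

lemma m_le_one (A : Set X) : μ.m A ≤ 1 :=
  μ.total ▸ μ.m_mono (Set.subset_univ A)

lemma m_preimage_finset {Y : Type*} (π : X → Y) (T : Finset Y) :
    μ.m (π ⁻¹' T) = ∑ y ∈ T, μ.m (π ⁻¹' {y}) := by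
  classical
  induction T using Finset.induction with
  | empty => simpa using μ.m_empty
  | insert y T hy ih =>
    rw [sum_insert hy, ← ih, coe_insert, Set.insert_eq, Set.preimage_union]
    exact μ.fin_add _ _ (Disjoint.preimage π (by simpa using hy))

lemma le_sum_mul_m_fiber {Y : Type*} (π : X → Y) (T : Finset Y) (hT : ∀ x, π x ∈ T)
    (g : Y → ℝ) {c : ℝ} (h : ∀ x, c ≤ g (π x)) :
    c ≤ ∑ y ∈ T, g y * μ.m (π ⁻¹' {y}) := by
  have hT : π ⁻¹' T = Set.univ := Set.eq_univ_of_forall hT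
  calc c = ∑ y ∈ T, c * μ.m (π ⁻¹' {y}) := by
        rw [← mul_sum, ← μ.m_preimage_finset, hT, μ.total, mul_one]
    _ ≤ ∑ y ∈ T, g y * μ.m (π ⁻¹' {y}) := by
        refine sum_le_sum fun y _ => ?_
        rcases (π ⁻¹' {y}).eq_empty_or_nonempty with he | ⟨x, rfl⟩
        · simp [he, μ.m_empty]
        · exact mul_le_mul_of_nonneg_right (h x) (μ.nonneg _)

lemma m_preimage_setOf {Y : Type*} (π : X → Y) (T : Finset Y) (hT : ∀ x, π x ∈ T)
    (p : Y → Prop) [DecidablePred p] :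
    μ.m (π ⁻¹' {y | p y}) = ∑ y ∈ T, if p y then μ.m (π ⁻¹' {y}) else 0 := by
  rw [← sum_filter, ← m_preimage_finset]
  congr 1
  ext x
  simp [hT x]

/-- Split `X` into the finitely many atoms of the Boolean algebra generated by the `B i`, `C i`. -/
lemma le_sum_m_sub_m {ι : Type*} (I : Finset ι) (B C : ι → Set X) {c : ℝ}
    (h : ∀ x, c ≤ ∑ i ∈ I, ((B i).indicator 1 x - (C i).indicator 1 x)) :
    c ≤ ∑ i ∈ I, (μ.m (B i) - μ.m (C i)) := by
  classical
  set π : X → Finset ι × Finset ι := fun x => (I.filter (x ∈ B ·), I.filter (x ∈ C ·))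
  set T := I.powerset ×ˢ I.powerset
  have hT : ∀ x, π x ∈ T := fun x => by simp [π, T]
  have hB : ∀ i ∈ I, B i = π ⁻¹' {y | i ∈ y.1} := fun i hi => by ext; simp [π, hi]
  have hC : ∀ i ∈ I, C i = π ⁻¹' {y | i ∈ y.2} := fun i hi => by ext; simp [π, hi]
  set g : Finset ι × Finset ι → ℝ := fun y =>
    ∑ i ∈ I, ((if i ∈ y.1 then 1 else 0) - (if i ∈ y.2 then 1 else 0))
  have hg : ∀ x, g (π x) = ∑ i ∈ I, ((B i).indicator 1 x - (C i).indicator 1 x) := fun x =>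
    sum_congr rfl fun i hi => by simp [π, hi, Set.indicator_apply]
  calc c ≤ ∑ y ∈ T, g y * μ.m (π ⁻¹' {y}) := μ.le_sum_mul_m_fiber π T hT g fun x => hg x ▸ h x
    _ = ∑ i ∈ I, (μ.m (B i) - μ.m (C i)) := by
        simp only [g, sum_mul, sub_mul, ite_mul, one_mul, zero_mul]
        rw [sum_comm]
        refine sum_congr rfl fun i hi => ?_
        rw [sum_sub_distrib, hB i hi, hC i hi, μ.m_preimage_setOf π T hT,
          μ.m_preimage_setOf π T hT]

variable {G : Type*} [Group G] [MulAction G X]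

/-- Rounding `k * u s` down writes it as a sum of `k` indicators of level sets of `u s`, which
`μ` can integrate. -/
lemma natCast_mul_sub_card_le (S : Finset G) {D : G → ℝ}
    (hD : ∀ s ∈ S, ∀ A : Set X, μ.m (s⁻¹ • A) - μ.m A ≤ D s)
    {u : G → X → ℝ} (hu : ∀ s x, u s x ∈ Set.Icc 0 1) {c : ℝ}
    (hc : ∀ x, c ≤ ∑ s ∈ S, (u s (s • x) - u s x)) (k : ℕ) :
    k * c - #S ≤ k * ∑ s ∈ S, D s := by
  set A : G × ℕ → Set X := fun p => {y | p.2 < ⌊k * u p.1 y⌋₊}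
  have hfloor : ∀ s y, ∑ j ∈ range k, (A (s, j)).indicator 1 y = (⌊k * u s y⌋₊ : ℝ) :=
    fun s y => by
      simp only [Set.indicator_apply, Pi.one_apply]
      exact sum_range_ite_lt_floor k (hu s y).2
  have hpt : ∀ x, k * c - #S ≤
      ∑ p ∈ S ×ˢ range k, ((p.1⁻¹ • A p).indicator 1 x - (A p).indicator 1 x) := fun x => by
    have hround : ∀ s ∈ S, (k * u s (s • x) - 1) - k * u s x ≤
        (⌊k * u s (s • x)⌋₊ : ℝ) - ⌊k * u s x⌋₊ := fun s _ => by
      have := Nat.lt_floor_add_one (k * u s (s • x))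
      have := Nat.floor_le (mul_nonneg k.cast_nonneg (hu s x).1)
      linarith
    calc k * c - #S ≤ ∑ s ∈ S, ((k * u s (s • x) - 1) - k * u s x) := by
          have := mul_le_mul_of_nonneg_left (hc x) k.cast_nonneg
          rw [mul_sum] at this
          simp only [sum_sub_distrib, sum_const, nsmul_eq_mul, mul_one, mul_sub] at this ⊢
          linarith
      _ ≤ ∑ s ∈ S, ((⌊k * u s (s • x)⌋₊ : ℝ) - ⌊k * u s x⌋₊) := sum_le_sum hround
      _ = _ := by
          rw [sum_product]
          refine sum_congr rfl fun s _ => ?_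
          rw [sum_sub_distrib, ← hfloor, ← hfloor]
          congr 1
          refine sum_congr rfl fun j _ => ?_
          rw [← Set.preimage_smul]
          rfl
  calc k * c - #S ≤ ∑ p ∈ S ×ˢ range k, (μ.m (p.1⁻¹ • A p) - μ.m (A p)) :=
        μ.le_sum_m_sub_m _ _ _ hpt
    _ ≤ ∑ p ∈ S ×ˢ range k, D p.1 := sum_le_sum fun p hp => hD _ (mem_product.1 hp).1 _
    _ = k * ∑ s ∈ S, D s := by simp [sum_product, sum_mul, mul_comm]

lemma le_sum_of_forall_le_sum_sub (S : Finset G) {D : G → ℝ}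
    (hD : ∀ s ∈ S, ∀ A : Set X, μ.m (s⁻¹ • A) - μ.m A ≤ D s)
    {u : G → X → ℝ} (hu : ∀ s x, u s x ∈ Set.Icc 0 1) {c : ℝ}
    (hc : ∀ x, c ≤ ∑ s ∈ S, (u s (s • x) - u s x)) :
    c ≤ ∑ s ∈ S, D s := by
  by_contra! hlt
  obtain ⟨k, hk⟩ := exists_nat_gt (#S / (c - ∑ s ∈ S, D s))
  have := μ.natCast_mul_sub_card_le S hD hu hc k
  rw [div_lt_iff₀ (sub_pos.2 hlt)] at hk
  nlinarith

end Mean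

lemma Finset.sum_sub_sum_le_card_sdiff {α : Type*} [DecidableEq α] (A B : Finset α) {f : α → ℝ}
    (hf : ∀ a, f a ∈ Set.Icc 0 1) : ∑ a ∈ A, f a - ∑ a ∈ B, f a ≤ #(A \ B) := by
  have hsplit := sum_inter_add_sum_sdiff A B f
  have hinter : ∑ a ∈ A ∩ B, f a ≤ ∑ a ∈ B, f a :=
    sum_le_sum_of_subset_of_nonneg inter_subset_right fun a _ _ => (hf a).1
  have hsdiff : ∑ a ∈ A \ B, f a ≤ #(A \ B) := by
    simpa using sum_le_card_nsmul (A \ B) f 1 fun a _ => (hf a).2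
  linarith

section CosetMean

variable {G X : Type*} [Group G] [MulAction G X] {H : Subgroup G} {μ : Mean X}

lemma MeanInvariant.m_inv_smul_eq_of_coset_eq (hμ : MeanInvariant H μ) {g g' : G}
    (h : (g : G ⧸ H) = g') (A : Set X) : μ.m (g'⁻¹ • A) = μ.m (g⁻¹ • A) := by
  have hh := QuotientGroup.eq.1 h
  have := hμ ⟨_, H.inv_mem hh⟩ (g⁻¹ • A)
  rw [Set.image_smul, Subgroup.smul_def, smul_smul] at this
  simpa using this

variable (μ) in
/-- For `H`-invariant `μ` this does not depend on the choice of the representatives `c.out`. -/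
noncomputable def cosetMean (P : Finset (G ⧸ H)) (hP : P.Nonempty) : Mean X where
  m A := (∑ c ∈ P, μ.m (c.out⁻¹ • A)) / #P
  nonneg _ := div_nonneg (sum_nonneg fun _ _ => μ.nonneg _) (Nat.cast_nonneg _)
  total := by
    simp [Set.smul_set_univ, μ.total, hP.card_pos.ne']
  fin_add A B hAB := by
    rw [← add_div, ← sum_add_distrib]
    congr 1
    refine sum_congr rfl fun c _ => ?_
    rw [Set.smul_set_union]
    exact μ.fin_add _ _ (Set.disjoint_smul_set.2 hAB)

lemma MeanInvariant.cosetMean_m_inv_smul_sub_le [DecidableEq (G ⧸ H)] (hμ : MeanInvariant H μ)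
    (P : Finset (G ⧸ H)) (hP : P.Nonempty) (s : G) (A : Set X) :
    (cosetMean μ P hP).m (s⁻¹ • A) - (cosetMean μ P hP).m A ≤ #(s • P \ P) / #P := by
  have hshift : ∑ c ∈ P, μ.m (c.out⁻¹ • s⁻¹ • A) = ∑ c ∈ s • P, μ.m (c.out⁻¹ • A) := by
    rw [smul_finset_def, sum_image fun _ _ _ _ h => MulAction.injective s h]
    refine sum_congr rfl fun c _ => ?_
    rw [smul_smul, ← mul_inv_rev]
    refine (hμ.m_inv_smul_eq_of_coset_eq ?_ A).symm
    rw [QuotientGroup.out_eq', ← smul_eq_mul, MulAction.Quotient.mk_smul_out]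
  simp only [cosetMean]
  rw [hshift, ← sub_div]
  exact div_le_div_of_nonneg_right (sum_sub_sum_le_card_sdiff _ _ fun c =>
    ⟨μ.nonneg _, μ.m_le_one _⟩) (Nat.cast_nonneg _)

end CosetMean

section Coarea

variable {G X : Type*} [Group G] [MulAction G X]

noncomputable def peelBottom (F : X → ℝ) (m : ℝ) (z : X) : ℝ :=
  if F z = 0 then 0 else F z - m

lemma sum_eq_sum_peelBottom_add (W : Finset X) (F : X → ℝ) (m : ℝ) :
    ∑ y ∈ W, F y = ∑ y ∈ W, peelBottom F m y + m * #(W.filter (F · ≠ 0)) := by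
  rw [mul_comm, ← nsmul_eq_mul, ← sum_const, sum_filter, ← sum_add_distrib]
  refine sum_congr rfl fun y _ => ?_
  by_cases h : F y = 0 <;> simp [peelBottom, h]

variable [DecidableEq X]

lemma sum_abs_ite_inv_smul_mem_sub_ite_mem (s : G) {Q W : Finset X} (hQ : Q ⊆ W)
    (hsQ : s • Q ⊆ W) :
    ∑ y ∈ W, |(if s⁻¹ • y ∈ Q then 1 else 0) - (if y ∈ Q then 1 else 0 : ℝ)| =
      2 * #(s • Q \ Q) := by
  have hpt : ∀ y, |(if s⁻¹ • y ∈ Q then 1 else 0) - (if y ∈ Q then 1 else 0 : ℝ)| =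
      (if y ∈ s • Q \ Q then 1 else 0) + (if y ∈ Q \ s • Q then 1 else 0) := fun y => by
    simp only [inv_smul_mem_iff]
    by_cases h₁ : y ∈ s • Q <;> by_cases h₂ : y ∈ Q <;> simp [h₁, h₂]
  rw [sum_congr rfl fun y _ => hpt y, sum_add_distrib, sum_boole, sum_boole,
    filter_mem_eq_inter, filter_mem_eq_inter, inter_eq_right.2 (sdiff_subset.trans hsQ),
    inter_eq_right.2 (sdiff_subset.trans hQ), card_sdiff_comm (card_smul_finset s Q).symm]
  ring

lemma abs_sub_eq_abs_sub_add_mul_abs_sub {a b m : ℝ} (hm : 0 ≤ m) (ha : a ≠ 0 → m ≤ a)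
    (hb : b ≠ 0 → m ≤ b) :
    |a - b| = |(if a = 0 then 0 else a - m) - (if b = 0 then 0 else b - m)| +
      m * |(if a = 0 then 0 else 1) - (if b = 0 then 0 else 1)| := by
  by_cases ha0 : a = 0 <;> by_cases hb0 : b = 0
  · simp [ha0, hb0]
  · simp only [ha0, hb0, if_true, if_false]
    have := hb hb0
    rw [abs_of_nonpos (by linarith), abs_of_nonpos (by linarith)]
    norm_num
  · simp only [ha0, hb0, if_true, if_false]
    have := ha ha0
    rw [abs_of_nonneg (by linarith), abs_of_nonneg (by linarith)]
    norm_num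
  · simp only [ha0, hb0, if_false]
    ring_nf

lemma sum_abs_sub_eq_sum_abs_sub_peelBottom_add (s : G) {W : Finset X} {F : X → ℝ} {m : ℝ}
    (hm : 0 ≤ m) (hmF : ∀ z, F z ≠ 0 → m ≤ F z) (hW : ∀ z, F z ≠ 0 → z ∈ W ∧ s • z ∈ W) :
    ∑ y ∈ W, |F (s⁻¹ • y) - F y| = ∑ y ∈ W, |peelBottom F m (s⁻¹ • y) - peelBottom F m y| +
      m * (2 * #(s • W.filter (F · ≠ 0) \ W.filter (F · ≠ 0))) := by
  set P := W.filter (F · ≠ 0)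
  have hind : ∀ z, (if F z = 0 then (0 : ℝ) else 1) = if z ∈ P then 1 else 0 := fun z => by
    by_cases h : F z = 0 <;> simp [P, h, (hW z · |>.1)]
  have hsP : s • P ⊆ W := fun y hy => by
    obtain ⟨z, hz, rfl⟩ := mem_smul_finset.1 hy
    exact (hW z (mem_filter.1 hz).2).2
  rw [← sum_abs_ite_inv_smul_mem_sub_ite_mem s (filter_subset _ W) hsP, mul_sum,
    ← sum_add_distrib]
  refine sum_congr rfl fun y _ => ?_
  rw [← hind, ← hind]
  exact abs_sub_eq_abs_sub_add_mul_abs_sub hm (hmF _) (hmF _)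

/-- Discrete co-area inequality, proved by peeling off the bottom layer of `F` at its least
nonzero value and inducting on the size of the support. -/
theorem two_mul_sum_le_sum_sum_abs_sub (S : Finset G) {ρ : ℝ}
    (hρ : ∀ Q : Finset X, ρ * #Q ≤ ∑ s ∈ S, (#(s • Q \ Q) : ℝ)) (W : Finset X) (F : X → ℝ)
    (hF : ∀ z, 0 ≤ F z) (hW : ∀ z, F z ≠ 0 → z ∈ W ∧ ∀ s ∈ S, s • z ∈ W) :
    2 * ρ * ∑ y ∈ W, F y ≤ ∑ s ∈ S, ∑ y ∈ W, |F (s⁻¹ • y) - F y| := by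
  induction hn : #(W.filter (F · ≠ 0)) using Nat.strong_induction_on generalizing F with
  | _ n ih =>
  set P := W.filter (F · ≠ 0)
  rcases P.eq_empty_or_nonempty with hP0 | hPne
  · have hF0 : ∀ y, F y = 0 := fun y => by
      by_contra h
      have : y ∈ P := mem_filter.2 ⟨(hW y h).1, h⟩
      simp [hP0] at this
    simp only [hF0, sub_self, abs_zero, sum_const_zero, mul_zero, le_refl]
  obtain ⟨z₀, hz₀, hm⟩ := exists_mem_eq_inf' hPne F
  set m := P.inf' hPne F
  have hmF : ∀ z, F z ≠ 0 → m ≤ F z := fun z hz => inf'_le _ (mem_filter.2 ⟨(hW z hz).1, hz⟩)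
  have hm0 : 0 ≤ m := hm ▸ hF z₀
  have hF'F : ∀ z, peelBottom F m z ≠ 0 → F z ≠ 0 := fun z hz h => hz (by simp [peelBottom, h])
  have hsub : W.filter (peelBottom F m · ≠ 0) ⊆ P := fun z hz => by
    rw [mem_filter] at hz
    exact mem_filter.2 ⟨hz.1, hF'F z hz.2⟩
  have hlt : #(W.filter (peelBottom F m · ≠ 0)) < n :=
    hn ▸ card_lt_card ((ssubset_iff_of_subset hsub).2 ⟨z₀, hz₀, by simp [peelBottom, hm]⟩)
  have hF' : ∀ z, 0 ≤ peelBottom F m z := fun z => by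
    by_cases h : F z = 0 <;> simp [peelBottom, h, hmF z]
  have := ih _ hlt _ hF' (fun z hz => hW z (hF'F z hz)) rfl
  have := mul_le_mul_of_nonneg_left (hρ P) hm0
  rw [sum_eq_sum_peelBottom_add W F m, sum_congr rfl fun s hs =>
    sum_abs_sub_eq_sum_abs_sub_peelBottom_add s hm0 hmF fun z hz => ⟨(hW z hz).1, (hW z hz).2 s hs⟩,
    sum_add_distrib, ← mul_sum, ← mul_sum]
  nlinarith

end Coarea

section Day

variable {G X : Type*} [Group G] [MulAction G X]

lemma exists_finset_sum_card_smul_sdiff_le_of_sum_sum_abs_sub_lt [DecidableEq X] (S : Finset G)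
    (ρ : ℝ) (W : Finset X) (F : X → ℝ) (hF : ∀ z, 0 ≤ F z)
    (hW : ∀ z, F z ≠ 0 → z ∈ W ∧ ∀ s ∈ S, s • z ∈ W)
    (hgrad : ∑ s ∈ S, ∑ y ∈ W, |F (s⁻¹ • y) - F y| < 2 * ρ * ∑ y ∈ W, F y) :
    ∃ Q : Finset X, Q.Nonempty ∧ ∑ s ∈ S, (#(s • Q \ Q) : ℝ) ≤ ρ * #Q := by
  by_contra! h
  refine hgrad.not_ge (two_mul_sum_le_sum_sum_abs_sub S (fun Q => ?_) W F hF hW)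
  rcases Q.eq_empty_or_nonempty with rfl | hQ
  · simp
  · exact (h Q hQ).le

variable (S : Finset G)

open Classical in
/-- For finitely supported `F = ∑ w x δ_x` on `X`, the norm of `∑ w x • displacementVec S x` is
the total variation `∑ s ∈ S, ‖s • F - F‖₁`. -/
noncomputable def displacementVec (x : X) : lp (fun _ : G × X => ℝ) 1 :=
  ∑ s ∈ S, (lp.single 1 (s, s • x) 1 - lp.single 1 (s, x) 1)

lemma sum_smul_displacementVec_apply [DecidableEq X] (t : Finset X) (w : X → ℝ) {s : G}
    (hs : s ∈ S) (y : X) :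
    (∑ x ∈ t, w x • displacementVec S x) (s, y) =
      (if s⁻¹ • y ∈ t then w (s⁻¹ • y) else 0) - (if y ∈ t then w y else 0) := by
  have hδ : ∀ x, displacementVec S x (s, y) =
      (if x = s⁻¹ • y then 1 else 0) - (if x = y then 1 else 0) := fun x => by
    classical
    rw [displacementVec, lp.coeFn_sum, Finset.sum_apply]
    simp only [lp.coeFn_sub, Pi.sub_apply, lp.single_apply, Pi.single_apply, Prod.mk.injEq,
      ite_and, sum_sub_distrib, sum_ite_eq, if_pos hs, eq_inv_smul_iff, eq_comm]
  simp only [lp.coeFn_sum, Finset.sum_apply, lp.coeFn_smul, Pi.smul_apply, smul_eq_mul, hδ,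
    mul_sub, mul_ite, mul_one, mul_zero, sum_sub_distrib, sum_ite_eq']

lemma sum_abs_le_norm {α : Type*} (v : lp (fun _ : α => ℝ) 1) (T : Finset α) :
    ∑ i ∈ T, |v i| ≤ ‖v‖ := by
  simpa using lp.sum_rpow_le_norm_rpow (by norm_num) v T

lemma exists_finset_of_mem_convexHull_displacementVec [DecidableEq X] {ρ : ℝ}
    {v : lp (fun _ : G × X => ℝ) 1} (hv : ‖v‖ < 2 * ρ)
    (hvC : v ∈ convexHull ℝ (Set.range (displacementVec S : X → _))) :
    ∃ Q : Finset X, Q.Nonempty ∧ ∑ s ∈ S, (#(s • Q \ Q) : ℝ) ≤ ρ * #Q := by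
  rw [convexHull_range_eq_exists_affineCombination] at hvC
  obtain ⟨t, w, hw0, hw1, rfl⟩ := hvC
  rw [t.affineCombination_eq_linear_combination _ _ hw1] at hv
  set F : X → ℝ := fun z => if z ∈ t then w z else 0
  set W := t ∪ S.biUnion (· • t)
  have hF : ∀ z, F z ≠ 0 → z ∈ t := fun z hz => by by_contra h; simp [F, h] at hz
  refine exists_finset_sum_card_smul_sdiff_le_of_sum_sum_abs_sub_lt S ρ W F
    (fun z => by by_cases h : z ∈ t <;> simp [F, h, hw0]) (fun z hz => ⟨?_, fun s hs => ?_⟩) ?_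
  · exact mem_union_left _ (hF z hz)
  · exact mem_union_right _ (mem_biUnion.2 ⟨s, hs, smul_mem_smul_finset (hF z hz)⟩)
  · have hmass : ∑ y ∈ W, F y = 1 := by
      rw [← hw1, ← sum_subset (subset_union_left (s₂ := S.biUnion (· • t)))
        fun y _ hy => by simp [F, hy]]
      exact sum_congr rfl fun y hy => by simp [F, hy]
    calc ∑ s ∈ S, ∑ y ∈ W, |F (s⁻¹ • y) - F y|
        = ∑ p ∈ S ×ˢ W, |(∑ x ∈ t, w x • displacementVec S x) p| := by
          rw [sum_product]
          exact sum_congr rfl fun s hs => sum_congr rfl fun y _ => by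
            rw [sum_smul_displacementVec_apply S t w hs]
      _ ≤ _ := sum_abs_le_norm _ _
      _ < 2 * ρ * ∑ y ∈ W, F y := by rwa [hmass, mul_one]

lemma exists_almost_invariant_of_separates {ρ : ℝ} (hρ : 0 < ρ)
    (f : StrongDual ℝ (lp (fun _ : G × X => ℝ) 1)) {a : ℝ}
    (hfB : ∀ v ∈ Metric.ball 0 (2 * ρ), f v < a) (hfC : ∀ x, a ≤ f (displacementVec S x)) :
    ∃ u : G → X → ℝ, (∀ s x, u s x ∈ Set.Icc 0 1) ∧ ∀ x, ρ ≤ ∑ s ∈ S, (u s (s • x) - u s x) := by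
  classical
  have ha : 0 < a := by simpa using hfB 0 (Metric.mem_ball_self (by positivity))
  have hle : ∀ v ∈ Metric.closedBall 0 (2 * ρ), f v ≤ a := by
    rw [← closure_ball _ (by positivity : (2 * ρ) ≠ 0)]
    exact closure_minimal (fun v hv => (hfB v hv).le) (isClosed_le f.continuous continuous_const)
  have hnorm : ‖f‖ ≤ a / (2 * ρ) := f.opNorm_bound_of_ball_bound (by positivity) a fun v hv => by
    rw [Real.norm_eq_abs, abs_le]
    exact ⟨by linarith [hle (-v) (by simpa using hv), map_neg f v], hle v hv⟩
  set h : G × X → ℝ := fun p => 2 * ρ / a * f (lp.single 1 p 1)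
  have hh : ∀ p, |h p| ≤ 1 := fun p => by
    have := (f.le_opNorm (lp.single 1 p 1)).trans (mul_le_mul_of_nonneg_right hnorm (norm_nonneg _))
    rw [lp.norm_single (by norm_num), norm_one, mul_one, Real.norm_eq_abs] at this
    rw [abs_mul, abs_of_pos (by positivity)]
    calc 2 * ρ / a * |f (lp.single 1 p 1)| ≤ 2 * ρ / a * (a / (2 * ρ)) := by gcongr
      _ = 1 := by field_simp
  refine ⟨fun s x => (1 + h (s, x)) / 2, fun s x => ?_, fun x => ?_⟩
  · have := abs_le.1 (hh (s, x))
    constructor <;> linarith [this.1, this.2]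
  · have hsum : ∑ s ∈ S, ((1 + h (s, s • x)) / 2 - (1 + h (s, x)) / 2) =
        ρ / a * f (displacementVec S x) := by
      simp only [displacementVec, map_sum, map_sub, mul_sum, h]
      exact sum_congr rfl fun s _ => by ring
    rw [hsum]
    calc ρ = ρ / a * a := by field_simp
      _ ≤ ρ / a * f (displacementVec S x) := by gcongr; exact hfC x

/-- Day's dichotomy, by Hahn–Banach separation of the ball of radius `2 * ρ` in `ℓ¹(G × X)` from
the convex hull of the vectors `displacementVec S x`. -/
theorem exists_finset_or_exists_almost_invariant [DecidableEq X] {ρ : ℝ} (hρ : 0 < ρ) :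
    (∃ Q : Finset X, Q.Nonempty ∧ ∑ s ∈ S, (#(s • Q \ Q) : ℝ) ≤ ρ * #Q) ∨
      ∃ u : G → X → ℝ, (∀ s x, u s x ∈ Set.Icc 0 1) ∧
        ∀ x, ρ ≤ ∑ s ∈ S, (u s (s • x) - u s x) := by
  by_cases h : Disjoint (Metric.ball 0 (2 * ρ))
    (convexHull ℝ (Set.range (displacementVec S : X → _)))
  · obtain ⟨f, a, hfB, hfC⟩ := geometric_hahn_banach_open (convex_ball 0 _) Metric.isOpen_ball
      (convex_convexHull ℝ _) h
    exact Or.inr <| exists_almost_invariant_of_separates S hρ f hfB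
      fun x => hfC _ (subset_convexHull ℝ _ ⟨x, rfl⟩)
  · obtain ⟨v, hvB, hvC⟩ := Set.not_disjoint_iff.1 h
    exact Or.inl <| exists_finset_of_mem_convexHull_displacementVec S (mem_ball_zero_iff.1 hvB) hvC

end Day

theorem Mean.exists_finset_sum_card_smul_sdiff_le {G X : Type*} [Group G] [MulAction G X]
    [DecidableEq X] (μ : Mean X) (S : Finset G) {D : G → ℝ}
    (hD : ∀ s ∈ S, ∀ A : Set X, μ.m (s⁻¹ • A) - μ.m A ≤ D s) {ε : ℝ} (hε : 0 < ε) :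
    ∃ Q : Finset X, Q.Nonempty ∧ ∑ s ∈ S, (#(s • Q \ Q) : ℝ) ≤ (∑ s ∈ S, D s + ε) * #Q := by
  have hD0 : 0 ≤ ∑ s ∈ S, D s := sum_nonneg fun s hs => by simpa [μ.m_empty] using hD s hs ∅
  obtain hQ | ⟨u, hu, hux⟩ := exists_finset_or_exists_almost_invariant (X := X) S
    (by positivity : 0 < ∑ s ∈ S, D s + ε)
  · exact hQ
  · linarith [μ.le_sum_of_forall_le_sum_sub S hD hu hux]

section PhiConst

variable {G X : Type*} [Group G] [MulAction G X] (S : Finset G)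

lemma ncard_smul_coe_sdiff_coe [DecidableEq X] (s : G) (Q : Finset X) :
    ((s • (Q : Set X)) \ (Q : Set X)).ncard = #(s • Q \ Q) := by
  rw [← Finset.coe_smul_finset, ← Finset.coe_sdiff, Set.ncard_coe_finset]

lemma phiConst_le [DecidableEq X] {Q : Finset X} (hQ : Q.Nonempty) :
    phiConst S X ≤ (∑ s ∈ S, (#(s • Q \ Q) : ℝ)) / #Q := by
  refine csInf_le ⟨0, ?_⟩ ⟨Q, hQ, by simp only [ncard_smul_coe_sdiff_coe]⟩
  rintro _ ⟨P, -, rfl⟩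
  positivity

lemma le_phiConst [DecidableEq X] [Nonempty X] {c : ℝ}
    (h : ∀ P : Finset X, P.Nonempty → c ≤ (∑ s ∈ S, (#(s • P \ P) : ℝ)) / #P) :
    c ≤ phiConst S X := by
  obtain ⟨x⟩ := ‹Nonempty X›
  refine le_csInf ⟨_, {x}, singleton_nonempty x, rfl⟩ ?_
  rintro _ ⟨P, hP, rfl⟩
  simpa only [ncard_smul_coe_sdiff_coe] using h P hP

end PhiConst

theorem phi_coset_ge_phi_general {G : Type*} [Group G] (S : Finset G)
    {X : Type*} [MulAction G X]
    (H : Subgroup G) (hH : AmenableAction ↥H X) :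
    phiConst S X ≤ phiConst S (G ⧸ H) := by
  classical
  obtain ⟨μ, hμ⟩ := hH
  refine le_phiConst S fun P hP => le_of_forall_pos_le_add fun ε hε => ?_
  obtain ⟨Q, hQ, hQS⟩ := (cosetMean μ P hP).exists_finset_sum_card_smul_sdiff_le S
    (fun s _ => hμ.cosetMean_m_inv_smul_sub_le P hP s) hε
  refine (phiConst_le S hQ).trans ?_
  rw [div_le_iff₀ (by exact_mod_cast hQ.card_pos), sum_div]
  exact hQS

/-- Lemma: if `S` generates `G` and the restriction to `H ≤ G` of the action `G ↷ X` is
amenable, then `φ_S(G/H) ≥ φ_S(X)`. -/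
theorem phi_coset_ge_phi {G : Type*} [Group G] [Countable G] (S : Finset G)
    (hS : Subgroup.closure (S : Set G) = ⊤) {X : Type*} [MulAction G X]
    (H : Subgroup G) (hH : AmenableAction ↥H X) :
    phiConst S X ≤ phiConst S (G ⧸ H) :=
  phi_coset_ge_phi_general S H hH
end
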